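/- For each λ ∈ {0,1,2,3} and 0 < V ≤ 1/√2, there exists a qubit pure state |ψ_λ⟩ ∈ ℂ² such that measuring the two mutually unbiased projective observables B₀ = σ_z and B₁ = σ_x on |ψ_λ⟩ reproduces the distributions P(b|y,ρ_λ) of the dimension-4 LHV-LHS decomposition of the white noise-BB84 box; in particular for λ=0 one may take |ψ₀⟩ = √((1+V)/2)|0⟩ + e^{iφ₀}√((1-V)/2)|1⟩ with cos φ₀ = -V/√(1-V²), which requires V ≤ 1/√2. -/

import Mathlib

open Finset Complex

/-- Bob's local-hidden-state response distributions P(b|y,ρ_λ) of the dimension-4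
LHV-LHS decomposition of the white noise-BB84 box. -/
noncomputable def PBob (V : ℝ) : Fin 4 → Fin 2 → Fin 2 → ℝ :=
  ![fun y b => if y = b then (1 + V) / 2 else (1 - V) / 2,
    fun y b => if y = b then (1 - V) / 2 else (1 + V) / 2,
    fun _ b => if b = 0 then (1 + V) / 2 else (1 - V) / 2,
    fun _ b => if b = 0 then (1 - V) / 2 else (1 + V) / 2]

/-- Born probabilities for outcome `b` (eigenvalue (-1)^b) of the mutually unbiased
qubit measurements B₀ = σ_z (y = 0) and B₁ = σ_x (y = 1) on the pure state ψ. -/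
noncomputable def born (ψ : Fin 2 → ℂ) (y b : Fin 2) : ℝ :=
  if y = 0 then ‖ψ b‖ ^ 2 else ‖ψ 0 + (-1 : ℂ) ^ (b : ℕ) * ψ 1‖ ^ 2 / 2

/-!
Pure qubit states are the points of the Bloch sphere, and the statistics of σ_z and σ_x on a state
only see the z- and x-components `(z, x)` of its Bloch vector. Each hidden state ρ_λ has
`(z, x) = (±V, ±V)`, a point of the unit disc exactly when `V ≤ 1/√2`; a pure state above it is
obtained by choosing the relative phase φ with `√(1 - z²) cos φ = x`.
-/

lemma norm_add_mul_exp_mul_sq (a b s φ : ℝ) :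
    ‖(a : ℂ) + s * (exp (φ * I) * b)‖ ^ 2 = a ^ 2 + s ^ 2 * b ^ 2 + 2 * s * a * b * Real.cos φ := by
  rw [Complex.sq_norm, normSq_apply]
  simp only [add_re, add_im, mul_re, mul_im, ofReal_re, ofReal_im, exp_ofReal_mul_I_re,
    exp_ofReal_mul_I_im]
  linear_combination s ^ 2 * b ^ 2 * Real.sin_sq_add_cos_sq φ

lemma mul_cos_arccos_div {x r : ℝ} (h : |x| ≤ r) : r * Real.cos (Real.arccos (x / r)) = x := by
  rcases (abs_nonneg x).trans h |>.eq_or_lt with rfl | hr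
  · simp [abs_nonpos_iff.mp h]
  · have hxr : |x / r| ≤ 1 := by rwa [abs_div, abs_of_pos hr, div_le_one hr]
    rw [Real.cos_arccos (abs_le.mp hxr).1 (abs_le.mp hxr).2, mul_div_cancel₀ _ hr.ne']

/-- The pure qubit state with Bloch vector `(√(1 - z²) cos φ, √(1 - z²) sin φ, z)`. -/
noncomputable def blochState (z φ : ℝ) : Fin 2 → ℂ :=
  ![(√((1 + z) / 2) : ℂ), exp (φ * I) * (√((1 - z) / 2) : ℂ)]

section blochState

variable {z : ℝ} (φ : ℝ)

lemma norm_blochState_zero_sq (hz : |z| ≤ 1) : ‖blochState z φ 0‖ ^ 2 = (1 + z) / 2 := by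
  simp only [blochState, Matrix.cons_val_zero, norm_real, Real.norm_eq_abs, sq_abs]
  exact Real.sq_sqrt (by linarith [(abs_le.mp hz).1])

lemma norm_blochState_one_sq (hz : |z| ≤ 1) : ‖blochState z φ 1‖ ^ 2 = (1 - z) / 2 := by
  simp only [blochState, Matrix.cons_val_one, Matrix.cons_val_fin_one, norm_mul,
    norm_exp_ofReal_mul_I, one_mul, norm_real, Real.norm_eq_abs, sq_abs]
  exact Real.sq_sqrt (by linarith [(abs_le.mp hz).2])

lemma born_blochState (hz : |z| ≤ 1) (y b : Fin 2) :
    born (blochState z φ) y b = (1 + (-1) ^ (b : ℕ) * ![z, √(1 - z ^ 2) * Real.cos φ] y) / 2 := by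
  obtain ⟨hz₁, hz₂⟩ := abs_le.mp hz
  have hpq : 2 * √((1 + z) / 2) * √((1 - z) / 2) = √(1 - z ^ 2) := by
    rw [mul_assoc, ← Real.sqrt_mul (by linarith),
      show (1 + z) / 2 * ((1 - z) / 2) = (1 - z ^ 2) / 2 ^ 2 by ring,
      Real.sqrt_div' _ (by positivity), Real.sqrt_sq zero_le_two]
    ring
  fin_cases y
  · fin_cases b
    · simp [born, norm_blochState_zero_sq φ hz]
    · simp [born, norm_blochState_one_sq φ hz, sub_eq_add_neg]
  · have hnorm := norm_add_mul_exp_mul_sq (√((1 + z) / 2)) (√((1 - z) / 2)) ((-1) ^ (b : ℕ)) φ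
    have hs : ((-1 : ℝ) ^ (b : ℕ)) ^ 2 = 1 := by rw [pow_right_comm, neg_one_sq, one_pow]
    simp only [born, Fin.reduceFinMk, one_ne_zero, if_false, blochState, Matrix.cons_val_zero,
      Matrix.cons_val_one, Matrix.cons_val_fin_one]
    push_cast at hnorm
    rw [hnorm, hs, Real.sq_sqrt (by linarith), Real.sq_sqrt (by linarith)]
    linear_combination (-1) ^ (b : ℕ) * Real.cos φ * hpq / 2

end blochState

lemma exists_born_eq_of_sq_add_sq_le_one {r : Fin 2 → ℝ} (hr : r 0 ^ 2 + r 1 ^ 2 ≤ 1) :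
    ∃ ψ : Fin 2 → ℂ, ‖ψ 0‖ ^ 2 + ‖ψ 1‖ ^ 2 = 1 ∧
      ∀ y b : Fin 2, born ψ y b = (1 + (-1) ^ (b : ℕ) * r y) / 2 := by
  have hz : |r 0| ≤ 1 := (sq_le_one_iff_abs_le_one _).mp (by nlinarith)
  have hx : |r 1| ≤ √(1 - r 0 ^ 2) := Real.abs_le_sqrt (by linarith)
  set φ := Real.arccos (r 1 / √(1 - r 0 ^ 2))
  refine ⟨blochState (r 0) φ, ?_, fun y b => ?_⟩
  · rw [norm_blochState_zero_sq φ hz, norm_blochState_one_sq φ hz]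
    ring
  · rw [born_blochState φ hz, mul_cos_arccos_div hx]
    congr 3
    fin_cases y <;> rfl

/-- Bloch components `(z, x)` of Bob's hidden states ρ_λ. -/
def bobBlochVector (V : ℝ) : Fin 4 → Fin 2 → ℝ :=
  ![![V, -V], ![-V, V], ![V, V], ![-V, -V]]

lemma PBob_eq_bobBlochVector (V : ℝ) (lam : Fin 4) (y b : Fin 2) :
    PBob V lam y b = (1 + (-1) ^ (b : ℕ) * bobBlochVector V lam y) / 2 := by
  fin_cases lam <;> fin_cases y <;> fin_cases b <;> simp [PBob, bobBlochVector, sub_eq_add_neg]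

lemma bobBlochVector_sq_add_sq (V : ℝ) (lam : Fin 4) :
    bobBlochVector V lam 0 ^ 2 + bobBlochVector V lam 1 ^ 2 = 2 * V ^ 2 := by
  fin_cases lam <;> simp [bobBlochVector, two_mul]

/-- For each λ and 0 < V ≤ 1/√2 there is a qubit pure state reproducing P(b|y,ρ_λ)
under the two mutually unbiased measurements σ_z, σ_x; in particular for λ = 0
the state √((1+V)/2)|0⟩ + e^{iφ₀}√((1-V)/2)|1⟩ with cos φ₀ = -V/√(1-V²) works. -/
theorem bb84_LHS_qubit_realization (V : ℝ) (hV0 : 0 < V) (hV1 : V ≤ (Real.sqrt 2)⁻¹) :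
    (∀ lam : Fin 4, ∃ ψ : Fin 2 → ℂ, ‖ψ 0‖ ^ 2 + ‖ψ 1‖ ^ 2 = 1 ∧
        ∀ y b : Fin 2, born ψ y b = PBob V lam y b) ∧
    (∀ φ : ℝ, Real.cos φ = -V / Real.sqrt (1 - V ^ 2) →
      ∀ y b : Fin 2,
        born (![((Real.sqrt ((1 + V) / 2) : ℝ) : ℂ),
                Complex.exp (φ * Complex.I) * ((Real.sqrt ((1 - V) / 2) : ℝ) : ℂ)]) y b
          = PBob V 0 y b) := by
  have hV : 2 * V ^ 2 ≤ 1 := by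
    have := pow_le_pow_left₀ hV0.le hV1 2
    rw [inv_pow, Real.sq_sqrt zero_le_two] at this
    linarith
  refine ⟨fun lam => ?_, fun φ hφ y b => ?_⟩
  · obtain ⟨ψ, hψ, hborn⟩ :=
      exists_born_eq_of_sq_add_sq_le_one ((bobBlochVector_sq_add_sq V lam).trans_le hV)
    exact ⟨ψ, hψ, fun y b => by rw [hborn, PBob_eq_bobBlochVector]⟩
  · have hroot : 0 < √(1 - V ^ 2) := Real.sqrt_pos.mpr (by linarith)
    change born (blochState V φ) y b = _
    rw [born_blochState φ ((sq_le_one_iff_abs_le_one V).mp (by linarith)), hφ,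
      mul_div_cancel₀ _ hroot.ne', PBob_eq_bobBlochVector]
    rfl
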